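/- Let θ ∈ (0, π/2], let Π be an affine subspace of ℝ³, let A, B, D ∈ Π with B ≠ D, and let C ∈ ℝ³ with C ≠ A, C ≠ D and A ≠ D. If the distance from C to Π is at least sin θ · dist(A, C), then sin(∠(A D C)) ≤ sin(∠(B D C)) / sin θ. -/

import Mathlib

open Real EuclideanGeometry

/-!
By the law of sines, `sin ∠ADC · |CD| = sin ∠CAD · |AC| ≤ |AC|`. On the other hand the foot of
the perpendicular from `C` to the line `BD` lies in `Π` at distance `sin ∠BDC · |CD|` from `C`,
so `sin θ · |AC| ≤ dist(C, Π) ≤ sin ∠BDC · |CD|`; combine and cancel `|CD| > 0`.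
-/

namespace InnerProductGeometry

variable {V : Type*} [NormedAddCommGroup V] [InnerProductSpace ℝ V]

theorem norm_sub_starProjection_singleton_eq_sin_angle_mul_norm (x y : V) :
    ‖y - (ℝ ∙ x).starProjection y‖ = sin (angle x y) * ‖y‖ := by
  rcases eq_or_ne x 0 with rfl | hx
  · simp [Submodule.span_zero_singleton]
  have hx' : ‖x‖ ≠ 0 := norm_ne_zero_iff.mpr hx
  have hcos : cos (angle x y) * ‖y‖ = inner ℝ x y / ‖x‖ := by
    rw [eq_div_iff hx', ← cos_angle_mul_norm_mul_norm]; ring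
  have hsq : ‖y - (ℝ ∙ x).starProjection y‖ ^ 2 = (sin (angle x y) * ‖y‖) ^ 2 := by
    rw [mul_pow, sin_sq, sub_mul, one_mul, ← mul_pow, hcos, Submodule.starProjection_singleton,
      RCLike.ofReal_real_eq_id, id, norm_sub_sq_real, real_inner_smul_right, real_inner_comm,
      norm_smul, mul_pow, Real.norm_eq_abs, sq_abs]
    field_simp
    ring
  exact (sq_eq_sq₀ (norm_nonneg _) (mul_nonneg (sin_angle_nonneg x y) (norm_nonneg y))).mp hsq

end InnerProductGeometry

namespace EuclideanGeometry

variable {V P : Type*} [NormedAddCommGroup V] [InnerProductSpace ℝ V] [MetricSpace P]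
  [NormedAddTorsor V P]

theorem sin_angle_mul_dist_le_dist (p₁ p₂ p₃ : P) :
    sin (∠ p₁ p₂ p₃) * dist p₂ p₃ ≤ dist p₃ p₁ := by
  rw [law_sin]
  exact mul_le_of_le_one_left dist_nonneg (sin_le_one _)

theorem infDist_le_sin_angle_mul_dist {s : AffineSubspace ℝ P} {p₁ p₂ : P} (p₃ : P)
    (h₁ : p₁ ∈ s) (h₂ : p₂ ∈ s) :
    Metric.infDist p₃ s ≤ sin (∠ p₁ p₂ p₃) * dist p₃ p₂ := by
  obtain ⟨t, ht⟩ := Submodule.mem_span_singleton.mp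
    ((ℝ ∙ (p₁ -ᵥ p₂)).starProjection_apply_mem (p₃ -ᵥ p₂))
  calc Metric.infDist p₃ s ≤ dist p₃ (t • (p₁ -ᵥ p₂) +ᵥ p₂) :=
        Metric.infDist_le_dist_of_mem (AffineSubspace.smul_vsub_vadd_mem s t h₁ h₂ h₂)
    _ = sin (∠ p₁ p₂ p₃) * dist p₃ p₂ := by
        rw [dist_eq_norm_vsub V, vsub_vadd_eq_vsub_sub, ht, dist_eq_norm_vsub V,
          InnerProductGeometry.norm_sub_starProjection_singleton_eq_sin_angle_mul_norm, angle]

end EuclideanGeometry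

theorem sine_comparison_general (θ : ℝ) (hθ : θ ∈ Set.Ioc 0 (π / 2))
    (P : AffineSubspace ℝ (EuclideanSpace ℝ (Fin 3)))
    (A B D C : EuclideanSpace ℝ (Fin 3))
    (hB : B ∈ P) (hD : D ∈ P)
    (hCD : C ≠ D)
    (hdist : Real.sin θ * dist A C ≤ Metric.infDist C (P : Set (EuclideanSpace ℝ (Fin 3)))) :
    Real.sin (∠ A D C) ≤ Real.sin (∠ B D C) / Real.sin θ := by
  have hsin : 0 < sin θ := sin_pos_of_pos_of_lt_pi hθ.1 (by linarith [hθ.2, pi_pos])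
  rw [le_div_iff₀ hsin]
  refine le_of_mul_le_mul_right ?_ (dist_pos.mpr hCD)
  calc sin (∠ A D C) * sin θ * dist C D = sin θ * (sin (∠ A D C) * dist D C) := by
        rw [dist_comm]; ring
    _ ≤ sin θ * dist C A := by gcongr; exact sin_angle_mul_dist_le_dist A D C
    _ ≤ Metric.infDist C P := by rwa [dist_comm]
    _ ≤ sin (∠ B D C) * dist C D := infDist_le_sin_angle_mul_dist C hB hD

theorem sine_comparison (θ : ℝ) (hθ : θ ∈ Set.Ioc 0 (π / 2))
    (P : AffineSubspace ℝ (EuclideanSpace ℝ (Fin 3)))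
    (A B D C : EuclideanSpace ℝ (Fin 3))
    (hA : A ∈ P) (hB : B ∈ P) (hD : D ∈ P)
    (hBD : B ≠ D) (hCA : C ≠ A) (hCD : C ≠ D) (hAD : A ≠ D)
    (hdist : Real.sin θ * dist A C ≤ Metric.infDist C (P : Set (EuclideanSpace ℝ (Fin 3)))) :
    Real.sin (∠ A D C) ≤ Real.sin (∠ B D C) / Real.sin θ :=
  sine_comparison_general θ hθ P A B D C hB hD hCD hdist
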